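/- arXiv:1712.05733 — 3 statements merged into one kernel-verified Lean document; each statement's English description precedes it below -/
import Mathlib

section
/- Let H be a symmetric d×d real matrix whose eigenvalues λ₁ ≤ ... ≤ λ_d satisfy λᵢ < 0 for i ≤ k and λᵢ > 0 for i > k, and let α > 0. Then the 2d×2d matrix A = [[0, I], [-H, -αI]] has exactly k eigenvalues (counted with multiplicity) with positive real part, namely μᵢ⁺ = (-α + √(α² - 4λᵢ))/2 for i = 1,...,k, and all other eigenvalues of A have negative real part. -/
/-!
For `x ≠ -α` the lower-right block of `x • 1 - A` is the invertible scalar `x + α`, and the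
Schur complement gives `det (x • 1 - A) = det ((x ^ 2 + α x) • 1 + H)`, hence
`χ_A = ∏ᵢ (X ^ 2 + α X + λᵢ)`. For `α > 0`, a complex root `μ` of `X ^ 2 + α X + λ` has
`Re μ < 0` when `λ > 0`: either `μ` is real and `μ (μ + α) = -λ < 0`, or `Re μ = -α / 2`.
When `λ < 0` both roots are real, of opposite signs, the positive one being
`(-α + √(α ^ 2 - 4λ)) / 2`. Finally `Re μ = 0` would force `λ = 0`.
-/

open Polynomial Matrix

theorem Polynomial.Monic.eq_prod_X_sub_C_of_roots_eq {K ι : Type*} [Field K] [Fintype ι]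
    {p : K[X]} (hp : p.Monic) (hdeg : p.natDegree = Fintype.card ι) (f : ι → K)
    (hroots : p.roots = Finset.univ.val.map f) : p = ∏ i, (X - C (f i)) := by
  rw [← prod_multiset_X_sub_C_of_monic_of_roots_card_eq hp (by simp [hroots, hdeg]), hroots,
    Multiset.map_map]
  rfl

theorem Polynomial.aroots_prod {T S ι : Type*} [CommRing T] [IsDomain T] [CommRing S] [IsDomain S]
    [Algebra T S] [Module.IsTorsionFree T S] (f : ι → T[X]) (s : Finset ι) (h : s.prod f ≠ 0) :
    (s.prod f).aroots S = s.val.bind fun i => (f i).aroots S := by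
  rw [aroots_def, Polynomial.map_prod, roots_prod]
  rwa [← Polynomial.map_prod, Polynomial.map_ne_zero_iff (FaithfulSMul.algebraMap_injective T S)]

theorem Multiset.bind_ite_singleton_zero {α β : Type*} (s : Multiset α) (p : α → Prop)
    [DecidablePred p] (f : α → β) :
    (s.bind fun a => if p a then {f a} else 0) = (s.filter p).map f := by
  rw [← bind_filter, bind_singleton]

section CompanionBlock

variable {K : Type*} [Field K] {n : Type*} [Fintype n] [DecidableEq n]

theorem Matrix.det_scalar_sub_fromBlocks_companion (H : Matrix n n K) (α x : K) (hx : x + α ≠ 0) :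
    (scalar (n ⊕ n) x - fromBlocks 0 1 (-H) (-(α • 1))).det =
      (scalar n (x ^ 2 + α * x) + H).det := by
  let := invertibleOfNonzero hx
  let := Invertible.map (scalar n) (x + α)
  have hblocks : scalar (n ⊕ n) x - fromBlocks 0 1 (-H) (-(α • 1)) =
      fromBlocks (scalar n x) (-1) H (scalar n (x + α)) := by
    ext (i | i) (j | j) <;> by_cases h : i = j <;> simp [h, add_comm]
  rw [hblocks, det_fromBlocks₂₂, ← det_mul]
  change det (scalar n (x + α) * (scalar n x - -1 * scalar n (x + α)⁻¹ * H)) = _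
  rw [neg_one_mul, neg_mul, sub_neg_eq_add, mul_add, ← mul_assoc, ← map_mul, ← map_mul,
    mul_inv_cancel₀ hx, map_one, one_mul]
  congr 3
  ring

variable [Infinite K]

theorem Matrix.charpoly_fromBlocks_companion (H : Matrix n n K) (α : K) :
    (fromBlocks 0 1 (-H) (-(α • 1))).charpoly =
      (-1) ^ Fintype.card n * H.charpoly.comp (-(X ^ 2 + C α * X)) := by
  refine eq_of_infinite_eval_eq _ _ ((Set.finite_singleton (-α)).infinite_compl.mono ?_)
  intro x hx
  have hxα : x + α ≠ 0 := fun h => hx (eq_neg_of_add_eq_zero_left h)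
  simp only [Set.mem_ofPred_eq, eval_charpoly, det_scalar_sub_fromBlocks_companion H α x hxα,
    eval_mul, eval_pow, eval_neg, eval_one, eval_comp, eval_add, eval_X, eval_C]
  rw [← det_neg, neg_sub, map_neg, sub_neg_eq_add, add_comm]

theorem Matrix.charpoly_fromBlocks_companion_of_charpoly_eq_prod {H : Matrix n n K} (α : K)
    {lam : n → K} (hH : H.charpoly = ∏ i, (X - C (lam i))) :
    (fromBlocks 0 1 (-H) (-(α • 1))).charpoly = ∏ i, (X ^ 2 + C α * X + C (lam i)) := by
  rw [charpoly_fromBlocks_companion, hH, prod_comp, ← Finset.card_univ, ← Finset.prod_const,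
    ← Finset.prod_mul_distrib]
  refine Finset.prod_congr rfl fun i _ => ?_
  simp only [sub_comp, X_comp, C_comp]
  ring

end CompanionBlock

section Quadratic

variable {α l : ℝ} {μ : ℂ}

theorem Polynomial.monic_X_sq_add_C_mul_X_add_C {R : Type*} [CommRing R] [Nontrivial R] (a b : R) :
    (X ^ 2 + C a * X + C b).Monic := by
  monicity!

theorem Complex.mem_aroots_quadratic :
    μ ∈ (X ^ 2 + C α * X + C l).aroots ℂ ↔ μ ^ 2 + α * μ + l = 0 := by
  rw [mem_aroots, and_iff_right (monic_X_sq_add_C_mul_X_add_C α l).ne_zero]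
  simp

theorem Complex.re_im_of_quadratic_eq_zero (hμ : μ ^ 2 + α * μ + l = 0) :
    μ.re * μ.re - μ.im * μ.im + α * μ.re + l = 0 ∧ μ.im * (2 * μ.re + α) = 0 := by
  have hre := congrArg Complex.re hμ
  have him := congrArg Complex.im hμ
  simp only [sq, Complex.add_re, Complex.mul_re, Complex.ofReal_re, Complex.ofReal_im,
    Complex.add_im, Complex.mul_im, Complex.zero_re, Complex.zero_im] at hre him
  constructor <;> linarith

theorem Complex.re_ne_zero_of_quadratic_eq_zero (hα : α ≠ 0) (hl : l ≠ 0)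
    (hμ : μ ^ 2 + α * μ + l = 0) : μ.re ≠ 0 := by
  intro h0
  obtain ⟨hre, him⟩ := Complex.re_im_of_quadratic_eq_zero hμ
  rw [h0, mul_zero, zero_add, mul_eq_zero] at him
  rcases him with him | rfl
  · exact hl (by simpa [h0, him] using hre)
  · exact hα rfl

theorem Complex.re_neg_of_quadratic_eq_zero (hα : 0 < α) (hl : 0 < l)
    (hμ : μ ^ 2 + α * μ + l = 0) : μ.re < 0 := by
  obtain ⟨hre, him⟩ := Complex.re_im_of_quadratic_eq_zero hμ
  rcases mul_eq_zero.1 him with him | him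
  · rw [him] at hre
    nlinarith
  · linarith

theorem quadratic_eq_mul_of_discrim_nonneg (h : 0 ≤ α ^ 2 - 4 * l) :
    (X ^ 2 + C α * X + C l : ℝ[X]) =
      (X - C ((-α + √(α ^ 2 - 4 * l)) / 2)) * (X - C ((-α - √(α ^ 2 - 4 * l)) / 2)) := by
  have hs := Real.sq_sqrt h
  have hsum : C ((-α + √(α ^ 2 - 4 * l)) / 2) + C ((-α - √(α ^ 2 - 4 * l)) / 2) = -C α := by
    rw [← C_add, ← C_neg]
    congr 1
    ring
  have hprod : C ((-α + √(α ^ 2 - 4 * l)) / 2) * C ((-α - √(α ^ 2 - 4 * l)) / 2) = C l := by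
    rw [← C_mul]
    congr 1
    linear_combination (-1 / 4 : ℝ) * hs
  linear_combination X * hsum - hprod

theorem filter_re_pos_aroots_quadratic (hα : 0 < α) (hl : l ≠ 0) :
    ((X ^ 2 + C α * X + C l).aroots ℂ).filter (fun μ : ℂ => 0 < μ.re) =
      if l < 0 then {(((-α + √(α ^ 2 - 4 * l)) / 2 : ℝ) : ℂ)} else 0 := by
  split_ifs with hneg
  · have hsqrt : α < √(α ^ 2 - 4 * l) := Real.lt_sqrt hα.le |>.2 (by linarith)
    rw [quadratic_eq_mul_of_discrim_nonneg (by nlinarith),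
      aroots_mul (mul_ne_zero (X_sub_C_ne_zero _) (X_sub_C_ne_zero _)), aroots_X_sub_C,
      aroots_X_sub_C, Multiset.filter_add, Multiset.filter_singleton, Multiset.filter_singleton,
      Complex.coe_algebraMap, Complex.ofReal_re, Complex.ofReal_re, if_pos (by linarith),
      if_neg (by linarith [Real.sqrt_nonneg (α ^ 2 - 4 * l)]), Multiset.empty_eq_zero, add_zero]
  · refine Multiset.filter_eq_nil.2 fun μ hμ => not_lt.2 ?_
    exact (Complex.re_neg_of_quadratic_eq_zero hα (lt_of_le_of_ne (not_lt.1 hneg) (Ne.symm hl))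
      (Complex.mem_aroots_quadratic.1 hμ)).le

end Quadratic

theorem block_matrix_eigenvalue_count_general (d k : ℕ)
    (H : Matrix (Fin d) (Fin d) ℝ) (α : ℝ) (hα : 0 < α)
    (lam : Fin d → ℝ)
    (hneg : ∀ i : Fin d, (i : ℕ) < k → lam i < 0)
    (hpos : ∀ i : Fin d, k ≤ (i : ℕ) → 0 < lam i)
    (hspec : H.charpoly.aroots ℝ = Multiset.map lam Finset.univ.val) :
    let A : Matrix (Fin d ⊕ Fin d) (Fin d ⊕ Fin d) ℝ :=
      Matrix.fromBlocks 0 1 (-H) (-(α • (1 : Matrix (Fin d) (Fin d) ℝ)))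
    ((A.charpoly.aroots ℂ).filter (fun μ => 0 < μ.re)) =
      Multiset.map (fun i : Fin d => (((-α + Real.sqrt (α ^ 2 - 4 * lam i)) / 2 : ℝ) : ℂ))
        ((Finset.univ.filter (fun i : Fin d => (i : ℕ) < k)).val) ∧
    ∀ μ ∈ A.charpoly.aroots ℂ, ¬ 0 < μ.re → μ.re < 0 := by
  intro A
  have hneg_iff (i : Fin d) : lam i < 0 ↔ (i : ℕ) < k :=
    ⟨fun h => not_le.1 fun hi => (hpos i hi).not_gt h, hneg i⟩
  have hne (i : Fin d) : lam i ≠ 0 := by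
    rcases lt_or_ge (i : ℕ) k with hi | hi
    exacts [(hneg i hi).ne, (hpos i hi).ne']
  have hchar : H.charpoly = ∏ i, (X - C (lam i)) :=
    (charpoly_monic H).eq_prod_X_sub_C_of_roots_eq (by simp) lam (by simpa [aroots_def] using hspec)
  have hroots : A.charpoly.aroots ℂ =
      Finset.univ.val.bind fun i => (X ^ 2 + C α * X + C (lam i)).aroots ℂ := by
    rw [charpoly_fromBlocks_companion_of_charpoly_eq_prod α hchar, aroots_prod]
    exact (monic_prod_of_monic _ _ fun i _ => monic_X_sq_add_C_mul_X_add_C α (lam i)).ne_zero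
  refine ⟨?_, fun μ hμ hre => ?_⟩
  · rw [hroots, Multiset.filter_bind,
      Multiset.bind_congr fun i _ => filter_re_pos_aroots_quadratic hα (hne i),
      Multiset.bind_ite_singleton_zero, Finset.filter_val]
    exact congrArg _ (Multiset.filter_congr fun i _ => hneg_iff i)
  · obtain ⟨i, -, hμ⟩ := Multiset.mem_bind.1 (hroots ▸ hμ)
    exact (not_lt.1 hre).lt_of_ne
      (Complex.re_ne_zero_of_quadratic_eq_zero hα.ne' (hne i) (Complex.mem_aroots_quadratic.1 hμ))

theorem block_matrix_eigenvalue_count (d k : ℕ) (hk : 1 ≤ k) (hkd : k ≤ d)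
    (H : Matrix (Fin d) (Fin d) ℝ) (hH : H.IsSymm) (α : ℝ) (hα : 0 < α)
    (lam : Fin d → ℝ) (hmono : Monotone lam)
    (hneg : ∀ i : Fin d, (i : ℕ) < k → lam i < 0)
    (hpos : ∀ i : Fin d, k ≤ (i : ℕ) → 0 < lam i)
    (hspec : H.charpoly.aroots ℝ = Multiset.map lam Finset.univ.val) :
    let A : Matrix (Fin d ⊕ Fin d) (Fin d ⊕ Fin d) ℝ :=
      Matrix.fromBlocks 0 1 (-H) (-(α • (1 : Matrix (Fin d) (Fin d) ℝ)))
    ((A.charpoly.aroots ℂ).filter (fun μ => 0 < μ.re)) =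
      Multiset.map (fun i : Fin d => (((-α + Real.sqrt (α ^ 2 - 4 * lam i)) / 2 : ℝ) : ℂ))
        ((Finset.univ.filter (fun i : Fin d => (i : ℕ) < k)).val) ∧
    ∀ μ ∈ A.charpoly.aroots ℂ, ¬ 0 < μ.re → μ.re < 0 :=
  block_matrix_eigenvalue_count_general d k H α hα lam hneg hpos hspec
end

section
/- Let A be a real n×n matrix all of whose complex eigenvalues have real part at most -μ for some μ > 0. Then there exists a constant C ≥ 1 such that the operator norm of the matrix exponential satisfies ‖exp(sA)‖ ≤ C e^{-(μ/2) s} for all s ≥ 0. -/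
/-!
Every eigenvalue of `exp A` is `exp z` for an eigenvalue `z` of `A` (take a common eigenvector
of the commuting matrices `A` and `exp A`), so the spectral radius of `exp A` is at most
`exp (-μ) < exp (-μ/2)`. Gelfand's formula then yields some `k ≥ 1` with
`‖exp (k A)‖ ≤ exp (-μk/2)`. By submultiplicativity, `s ↦ ‖exp (s A)‖ exp (μs/2)` does not
increase under `s ↦ s + k`, so its bound on the compact interval `[0, k]` holds for all `s ≥ 0`.
A real matrix is handled through its complexification, whose L2 operator norm dominates the
real one.
-/

open NormedSpace Filter Set
open scoped Matrix

theorem Module.End.exists_hasEigenvector_of_commute {K V : Type*} [Field K] [IsAlgClosed K]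
    [AddCommGroup V] [Module K V] [FiniteDimensional K V] {f g : Module.End K V}
    (hfg : Commute f g) {w : K} (hw : f.HasEigenvalue w) :
    ∃ z v, f.HasEigenvector w v ∧ g.HasEigenvector z v := by
  have hmaps := Module.End.mapsTo_genEigenspace_of_comm hfg w 1
  have : Nontrivial (f.eigenspace w) := Submodule.nontrivial_iff_ne_bot.mpr hw
  obtain ⟨z, hz⟩ := Module.End.exists_eigenvalue (g.restrict hmaps)
  obtain ⟨v, hv⟩ := hz.exists_hasEigenvector
  have hv0 : (v : V) ≠ 0 := by simpa using hv.2
  exact ⟨z, v, ⟨v.2, hv0⟩,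
    ⟨Module.End.mem_eigenspace_iff.mpr (congrArg Subtype.val hv.apply_eq_smul), hv0⟩⟩

open scoped Matrix.Norms.L2Operator in
theorem Matrix.exp_mulVec_of_mulVec_eq_smul {ι 𝕂 : Type*} [Fintype ι] [DecidableEq ι] [RCLike 𝕂]
    {B : Matrix ι ι 𝕂} {u : ι → 𝕂} {z : 𝕂} (h : B *ᵥ u = z • u) :
    exp B *ᵥ u = exp z • u := by
  have hpow (k : ℕ) : B ^ k *ᵥ u = z ^ k • u := by
    induction k with
    | zero => simp
    | succ k ih => rw [pow_succ', ← mulVec_mulVec, ih, mulVec_smul, h, smul_smul, ← pow_succ]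
  -- `exp` does not depend on the norm; the L2 operator norm only serves to sum the series.
  have hB := (exp_series_hasSum_exp' (𝕂 := 𝕂) B).map (mulVec.addMonoidHomLeft u)
    (continuous_id.matrix_mulVec continuous_const)
  have hz := (exp_series_hasSum_exp' (𝕂 := 𝕂) z).smul_const u
  refine hB.unique (hz.congr_fun fun k => ?_)
  simp [mulVec.addMonoidHomLeft, Matrix.smul_mulVec, hpow, smul_smul]

theorem Matrix.spectrum_exp_subset {ι : Type*} [Fintype ι] [DecidableEq ι] (B : Matrix ι ι ℂ) :
    spectrum ℂ (exp B) ⊆ Complex.exp '' spectrum ℂ B := by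
  intro w hw
  rw [← spectrum_toLin', ← Module.End.hasEigenvalue_iff_mem_spectrum] at hw
  have hcomm : Commute (exp B).toLin' B.toLin' :=
    ((Commute.refl B).exp_left).map Matrix.toLinAlgEquiv'
  obtain ⟨z, u, hw, hz⟩ := Module.End.exists_hasEigenvector_of_commute hcomm hw
  refine ⟨z, ?_, ?_⟩
  · rw [← spectrum_toLin', ← Module.End.hasEigenvalue_iff_mem_spectrum]
    exact Module.End.hasEigenvalue_of_hasEigenvector hz
  · have hBu : B *ᵥ u = z • u := by simpa using hz.apply_eq_smul
    have hexp : exp B *ᵥ u = w • u := by simpa using hw.apply_eq_smul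
    rw [exp_mulVec_of_mulVec_eq_smul hBu, ← Complex.exp_eq_exp_ℂ] at hexp
    exact smul_left_injective ℂ hw.2 hexp

theorem Matrix.spectralRadius_exp_le {ι : Type*} [Fintype ι] [DecidableEq ι] (B : Matrix ι ι ℂ)
    {c : ℝ} (h : ∀ z ∈ spectrum ℂ B, z.re ≤ c) :
    spectralRadius ℂ (exp B) ≤ ENNReal.ofReal (Real.exp c) := by
  refine iSup₂_le fun w hw => ?_
  obtain ⟨z, hz, rfl⟩ := B.spectrum_exp_subset hw
  rw [← ENNReal.ofReal_coe_nnreal, coe_nnnorm, Complex.norm_exp]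
  exact ENNReal.ofReal_le_ofReal (Real.exp_le_exp.2 (h z hz))

theorem spectrum.eventually_norm_pow_le_of_spectralRadius_lt {A : Type*} [NormedRing A]
    [NormedAlgebra ℂ A] [CompleteSpace A] {a : A} {r : ℝ}
    (h : spectralRadius ℂ a < ENNReal.ofReal r) : ∀ᶠ k : ℕ in atTop, ‖a ^ k‖ ≤ r ^ k := by
  filter_upwards [(pow_norm_pow_one_div_tendsto_nhds_spectralRadius a).eventually_lt_const h,
    eventually_gt_atTop 0] with k hk hk0
  have hr : 0 < r := ENNReal.ofReal_pos.mp (pos_of_gt h)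
  have hroot : ‖a ^ k‖ ^ (1 / k : ℝ) ≤ r := ((ENNReal.ofReal_lt_ofReal_iff hr).mp hk).le
  calc ‖a ^ k‖ = (‖a ^ k‖ ^ (1 / k : ℝ)) ^ k := by
        rw [one_div, Real.rpow_inv_natCast_pow (norm_nonneg _) hk0.ne']
    _ ≤ r ^ k := by gcongr

theorem forall_le_of_map_add_le {f : ℝ → ℝ} {T M : ℝ} (hT : 0 < T)
    (hf : ∀ s ≥ 0, f (s + T) ≤ f s) (hM : ∀ s ∈ Ico 0 T, f s ≤ M) : ∀ s ≥ 0, f s ≤ M := by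
  have hshift (m : ℕ) : ∀ r ≥ 0, f (r + m * T) ≤ f r := by
    induction m with
    | zero => simp
    | succ m ih =>
      intro r hr
      calc f (r + (m + 1 : ℕ) * T) = f ((r + m * T) + T) := by push_cast; ring_nf
        _ ≤ f (r + m * T) := hf _ (by positivity)
        _ ≤ f r := ih r hr
  intro s hs
  set m := ⌊s / T⌋₊
  have hm : (m : ℝ) * T ≤ s := (le_div_iff₀ hT).mp (Nat.floor_le (by positivity))
  have hm' : s < (m + 1) * T := (div_lt_iff₀ hT).mp (Nat.lt_floor_add_one _)
  calc f s = f ((s - m * T) + m * T) := by ring_nf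
    _ ≤ f (s - m * T) := hshift m _ (by linarith)
    _ ≤ M := hM _ ⟨by linarith, by linarith⟩

theorem NormedSpace.exists_norm_exp_smul_le_of_norm_exp_smul_le {𝔸 : Type*} [NormedRing 𝔸]
    [NormedAlgebra ℝ 𝔸] [CompleteSpace 𝔸] {a : 𝔸} {T ω : ℝ} (hT : 0 < T)
    (h : ‖exp (T • a)‖ ≤ Real.exp (ω * T)) :
    ∃ C, 1 ≤ C ∧ ∀ s ≥ 0, ‖exp (s • a)‖ ≤ C * Real.exp (ω * s) := by
  let +nondep : NormedAlgebra ℚ 𝔸 := .restrictScalars ℚ ℝ 𝔸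
  set f : ℝ → ℝ := fun s => ‖exp (s • a)‖ * Real.exp (-(ω * s)) with hf
  have hshift : ∀ s ≥ 0, f (s + T) ≤ f s := by
    intro s _
    have hsplit : exp ((s + T) • a) = exp (s • a) * exp (T • a) := by
      rw [add_smul, exp_add_of_commute (((Commute.refl a).smul_left s).smul_right T)]
    calc f (s + T) ≤ ‖exp (s • a)‖ * Real.exp (ω * T) * Real.exp (-(ω * (s + T))) := by
          simp only [hf, hsplit]
          gcongr
          exact (norm_mul_le _ _).trans (by gcongr)
      _ = f s := by
          simp only [hf, mul_assoc, ← Real.exp_add]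
          ring_nf
  have hcont : Continuous f := by fun_prop
  obtain ⟨M, hM⟩ := isCompact_Icc.bddAbove_image (hcont.continuousOn (s := Icc 0 T))
  have hfM := forall_le_of_map_add_le hT hshift fun r hr => hM ⟨r, Ico_subset_Icc_self hr, rfl⟩
  refine ⟨max 1 M, le_max_left _ _, fun s hs => ?_⟩
  calc ‖exp (s • a)‖ = f s * Real.exp (ω * s) := by simp [hf, mul_assoc, ← Real.exp_add]
    _ ≤ max 1 M * Real.exp (ω * s) := by gcongr; exact (hfM s hs).trans (le_max_right _ _)

theorem EuclideanSpace.norm_toLp_algebraMap_comp {ι 𝕜 : Type*} [Fintype ι] [RCLike 𝕜]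
    (x : ι → ℝ) : ‖WithLp.toLp 2 (algebraMap ℝ 𝕜 ∘ x)‖ = ‖WithLp.toLp 2 x‖ := by
  simp [EuclideanSpace.norm_eq]

open scoped Matrix.Norms.L2Operator in
theorem Matrix.norm_toEuclideanLin_apply_le {m n 𝕜 : Type*} [Fintype m] [Fintype n]
    [DecidableEq n] [RCLike 𝕜] (M : Matrix m n ℝ) (v : EuclideanSpace ℝ n) :
    ‖toEuclideanLin M v‖ ≤ ‖M.map (algebraMap ℝ 𝕜)‖ * ‖v‖ := by
  have hmul : M.map (algebraMap ℝ 𝕜) *ᵥ (algebraMap ℝ 𝕜 ∘ v.ofLp) =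
      algebraMap ℝ 𝕜 ∘ (M *ᵥ v.ofLp) :=
    funext fun i => (RingHom.map_mulVec _ M _ i).symm
  rw [toLpLin_apply, ← EuclideanSpace.norm_toLp_algebraMap_comp (𝕜 := 𝕜), ← hmul]
  calc _ ≤ ‖M.map (algebraMap ℝ 𝕜)‖ * ‖WithLp.toLp 2 (algebraMap ℝ 𝕜 ∘ v.ofLp)‖ :=
        l2_opNorm_mulVec _ (WithLp.toLp 2 (algebraMap ℝ 𝕜 ∘ v.ofLp))
    _ = ‖M.map (algebraMap ℝ 𝕜)‖ * ‖v‖ := by rw [EuclideanSpace.norm_toLp_algebraMap_comp]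

open scoped Matrix.Norms.L2Operator in
theorem Matrix.exp_map_algebraMap {ι 𝕜 : Type*} [Fintype ι] [DecidableEq ι] [RCLike 𝕜]
    (M : Matrix ι ι ℝ) : exp (M.map (algebraMap ℝ 𝕜)) = (exp M).map (algebraMap ℝ 𝕜) := by
  let +nondep : NormedAlgebra ℚ (Matrix ι ι ℝ) := .restrictScalars ℚ ℝ _
  let +nondep : NormedAlgebra ℚ (Matrix ι ι 𝕜) := .restrictScalars ℚ 𝕜 _
  exact (map_exp (algebraMap ℝ 𝕜).mapMatrix
    (continuous_id.matrix_map (continuous_algebraMap ℝ 𝕜)) M).symm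

theorem matrix_exp_decay (n : ℕ) (A : Matrix (Fin n) (Fin n) ℝ) (mu : ℝ)
    (hmu : 0 < mu)
    (hspec : ∀ z ∈ spectrum ℂ (A.map (algebraMap ℝ ℂ)), z.re ≤ -mu) :
    ∃ C : ℝ, 1 ≤ C ∧ ∀ s ≥ (0 : ℝ), ∀ v : EuclideanSpace ℝ (Fin n),
      ‖(Matrix.toEuclideanLin (NormedSpace.exp (s • A))) v‖ ≤
        C * Real.exp (-(mu / 2) * s) * ‖v‖ := by
  open scoped Matrix.Norms.L2Operator in
  set Ac := A.map (algebraMap ℝ ℂ)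
  have hrad : spectralRadius ℂ (exp Ac) < ENNReal.ofReal (Real.exp (-(mu / 2))) :=
    (Ac.spectralRadius_exp_le hspec).trans_lt <|
      (ENNReal.ofReal_lt_ofReal_iff (Real.exp_pos _)).2 (Real.exp_lt_exp.2 (by linarith))
  obtain ⟨k, hk, hk0⟩ :=
    ((spectrum.eventually_norm_pow_le_of_spectralRadius_lt hrad).and (eventually_gt_atTop 0)).exists
  have hT : ‖exp ((k : ℝ) • Ac)‖ ≤ Real.exp (-(mu / 2) * k) := by
    rwa [Nat.cast_smul_eq_nsmul, Matrix.exp_nsmul, mul_comm, Real.exp_nat_mul]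
  obtain ⟨C, hC1, hC⟩ := exists_norm_exp_smul_le_of_norm_exp_smul_le (by positivity) hT
  refine ⟨C, hC1, fun s hs v => ?_⟩
  calc ‖Matrix.toEuclideanLin (exp (s • A)) v‖ ≤ ‖(exp (s • A)).map (algebraMap ℝ ℂ)‖ * ‖v‖ :=
        Matrix.norm_toEuclideanLin_apply_le _ v
    _ = ‖exp (s • Ac)‖ * ‖v‖ := by
        rw [← Matrix.exp_map_algebraMap, Matrix.map_smul _ _ fun x => by simp]
    _ ≤ C * Real.exp (-(mu / 2) * s) * ‖v‖ := by gcongr; exact hC s hs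
end

section
/- Let H be a symmetric d×d real matrix with smallest eigenvalue λ_min ≤ -γ₁ < 0 and let α > 0. Then the largest real part among the eigenvalues of A = [[0, I], [-H, -αI]] equals μ₀ = (-α + √(α² - 4λ_min))/2, and μ₀ ≥ (-α + √(α² + 4γ₁))/2 > 0. -/
/-! An eigenvector `(x, y)` of `A` for `μ` has `y = μ x` and `H x = -(μ² + α μ) x`, so the
eigenvalues of `A` are the roots of `μ² + α μ + λ = 0` with `λ` an eigenvalue of `H`, and these `λ`
are real because `H` is symmetric. A non-real root has real part `-α / 2`, while a real root
satisfies `(2 μ + α)² = α² - 4 λ ≤ α² - 4 λ_min`; so the largest real part is attained by the larger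
root for `λ = λ_min`. -/

open Matrix Polynomial

section Field

variable {K : Type*} [Field K] {n : Type*} [Fintype n] [DecidableEq n]

theorem Matrix.mem_spectrum_iff_exists_mulVec_eq_smul {M : Matrix n n K} {μ : K} :
    μ ∈ spectrum K M ↔ ∃ v ≠ 0, M *ᵥ v = μ • v := by
  rw [← spectrum_toLin', ← Module.End.hasEigenvalue_iff_mem_spectrum]
  constructor
  · intro h
    obtain ⟨v, hv⟩ := h.exists_hasEigenvector
    exact ⟨v, hv.2, by simpa using Module.End.mem_eigenspace_iff.mp hv.1⟩
  · rintro ⟨v, hv0, hv⟩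
    exact Module.End.hasEigenvalue_of_hasEigenvector
      ⟨Module.End.mem_eigenspace_iff.mpr (by simpa using hv), hv0⟩

theorem Matrix.mem_spectrum_fromBlocks_zero_one_iff {M : Matrix n n K} {a μ : K} :
    μ ∈ spectrum K (fromBlocks 0 (1 : Matrix n n K) (-M) (-(a • 1))) ↔
      -(μ ^ 2 + a * μ) ∈ spectrum K M := by
  simp only [mem_spectrum_iff_exists_mulVec_eq_smul]
  constructor
  · rintro ⟨w, hw0, hw⟩
    obtain ⟨x, y, rfl⟩ : ∃ x y, w = Sum.elim x y := ⟨_, _, (Sum.elim_comp_inl_inr w).symm⟩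
    rw [fromBlocks_mulVec] at hw
    simp only [zero_mulVec, one_mulVec, zero_add, neg_mulVec, smul_mulVec] at hw
    have hy : y = μ • x := funext fun i => by simpa using congrFun hw (Sum.inl i)
    have hx : -(M *ᵥ x) - a • y = μ • y := funext fun i => by
      simpa [sub_eq_add_neg] using congrFun hw (Sum.inr i)
    refine ⟨x, fun hx0 => hw0 ?_, ?_⟩
    · simp [hy, hx0]
    · rw [hy] at hx
      linear_combination (norm := module) -hx
  · rintro ⟨v, hv0, hv⟩
    refine ⟨Sum.elim v (μ • v), fun h => hv0 ?_, ?_⟩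
    · simpa using congrArg (· ∘ Sum.inl) h
    · rw [fromBlocks_mulVec]
      ext (i | i)
      · simp
      · simp [neg_mulVec, smul_mulVec, hv]
        ring

theorem Matrix.map_mem_spectrum_map_iff {L : Type*} [Field L] (f : K →+* L)
    (M : Matrix n n K) (x : K) : f x ∈ spectrum L (M.map f) ↔ x ∈ spectrum K M := by
  rw [mem_spectrum_iff_isRoot_charpoly, mem_spectrum_iff_isRoot_charpoly, charpoly_map,
    isRoot_map_iff f.injective]

theorem Matrix.IsSymm.spectrum_map_ofReal {H : Matrix n n ℝ} (hH : H.IsSymm) :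
    spectrum ℂ (H.map (algebraMap ℝ ℂ)) = (↑) '' spectrum ℝ H := by
  ext z
  constructor
  · intro hz
    have hHerm : (H.map (algebraMap ℝ ℂ)).IsHermitian :=
      (isHermitian_iff_isSymm.mpr hH).map _ fun x => by simp
    obtain ⟨x, -, rfl⟩ := hHerm.spectrum_eq_image_range ▸ hz
    exact ⟨x, (map_mem_spectrum_map_iff (algebraMap ℝ ℂ) H x).mp hz, rfl⟩
  · rintro ⟨x, hx, rfl⟩
    exact (map_mem_spectrum_map_iff (algebraMap ℝ ℂ) H x).mpr hx

end Field

theorem Complex.re_le_of_sq_add_mul_add_eq_zero {μ : ℂ} {a b c : ℝ}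
    (hμ : μ ^ 2 + a * μ + b = 0) (hcb : c ≤ b) : μ.re ≤ (-a + √(a ^ 2 - 4 * c)) / 2 := by
  have hre := congrArg Complex.re hμ
  have him := congrArg Complex.im hμ
  simp only [pow_two, add_re, add_im, mul_re, mul_im, ofReal_re, ofReal_im, zero_mul, sub_zero,
    add_zero, zero_re, zero_im] at hre him
  suffices 2 * μ.re + a ≤ √(a ^ 2 - 4 * c) by linarith
  rcases mul_eq_zero.mp (show μ.im * (2 * μ.re + a) = 0 by linear_combination him)
    with him0 | hre0
  · refine (le_abs_self _).trans (Real.abs_le_sqrt ?_)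
    rw [him0] at hre
    linear_combination 4 * hre + 4 * hcb
  · exact hre0 ▸ Real.sqrt_nonneg _

theorem largest_real_part_eigenvalue_general (d : ℕ) (H : Matrix (Fin d) (Fin d) ℝ)
    (hH : H.IsSymm) (γ₁ α lamMin : ℝ) (hγ : 0 < γ₁)
    (hmem : lamMin ∈ spectrum ℝ H)
    (hmin : ∀ lam ∈ spectrum ℝ H, lamMin ≤ lam)
    (hbound : lamMin ≤ -γ₁) :
    let A : Matrix (Fin d ⊕ Fin d) (Fin d ⊕ Fin d) ℝ :=
      Matrix.fromBlocks 0 1 (-H) (-(α • (1 : Matrix (Fin d) (Fin d) ℝ)))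
    let μ₀ := (-α + Real.sqrt (α ^ 2 - 4 * lamMin)) / 2
    IsGreatest {x : ℝ | ∃ μ ∈ spectrum ℂ (A.map (algebraMap ℝ ℂ)), μ.re = x} μ₀ ∧
    (-α + Real.sqrt (α ^ 2 + 4 * γ₁)) / 2 ≤ μ₀ ∧
    0 < (-α + Real.sqrt (α ^ 2 + 4 * γ₁)) / 2 := by
  intro A μ₀
  have hA : A.map (algebraMap ℝ ℂ) =
      fromBlocks 0 1 (-H.map (algebraMap ℝ ℂ)) (-((α : ℂ) • 1)) := by
    simp [A, fromBlocks_map, Matrix.map_neg, Matrix.map_smul, Matrix.map_one]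
  have hspec (μ : ℂ) : μ ∈ spectrum ℂ (A.map (algebraMap ℝ ℂ)) ↔
      ∃ lam ∈ spectrum ℝ H, μ ^ 2 + α * μ + lam = 0 := by
    rw [hA, mem_spectrum_fromBlocks_zero_one_iff, hH.spectrum_map_ofReal]
    refine exists_congr fun lam => and_congr_right' ?_
    rw [eq_neg_iff_add_eq_zero, add_comm]
  have hμ₀ : μ₀ ^ 2 + α * μ₀ + lamMin = 0 := by
    have := Real.sq_sqrt (show 0 ≤ α ^ 2 - 4 * lamMin by nlinarith)
    linear_combination this / 4
  refine ⟨⟨⟨μ₀, (hspec μ₀).2 ⟨lamMin, hmem, by exact_mod_cast hμ₀⟩, rfl⟩, ?_⟩, ?_, ?_⟩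
  · rintro _ ⟨μ, hμ, rfl⟩
    obtain ⟨lam, hlam, hroot⟩ := (hspec μ).1 hμ
    exact Complex.re_le_of_sq_add_mul_add_eq_zero hroot (hmin lam hlam)
  · show _ ≤ (-α + √(α ^ 2 - 4 * lamMin)) / 2
    gcongr
    linarith
  · have : α < √(α ^ 2 + 4 * γ₁) := Real.lt_sqrt_of_sq_lt (by linarith)
    linarith

theorem largest_real_part_eigenvalue (d : ℕ) (H : Matrix (Fin d) (Fin d) ℝ)
    (hH : H.IsSymm) (γ₁ α lamMin : ℝ) (hγ : 0 < γ₁) (hα : 0 < α)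
    (hmem : lamMin ∈ spectrum ℝ H)
    (hmin : ∀ lam ∈ spectrum ℝ H, lamMin ≤ lam)
    (hbound : lamMin ≤ -γ₁) :
    let A : Matrix (Fin d ⊕ Fin d) (Fin d ⊕ Fin d) ℝ :=
      Matrix.fromBlocks 0 1 (-H) (-(α • (1 : Matrix (Fin d) (Fin d) ℝ)))
    let μ₀ := (-α + Real.sqrt (α ^ 2 - 4 * lamMin)) / 2
    IsGreatest {x : ℝ | ∃ μ ∈ spectrum ℂ (A.map (algebraMap ℝ ℂ)), μ.re = x} μ₀ ∧
    (-α + Real.sqrt (α ^ 2 + 4 * γ₁)) / 2 ≤ μ₀ ∧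
    0 < (-α + Real.sqrt (α ^ 2 + 4 * γ₁)) / 2 :=
  largest_real_part_eigenvalue_general d H hH γ₁ α lamMin hγ hmem hmin hbound
end
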